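/- Let d ≥ 1 be an integer and let (u_n)_{n ≥ 0} be the periodic binary sequence (0^d 1)^∞, i.e., u_n = 1 if n ≡ d (mod d+1) and u_n = 0 otherwise. For each N let ℐ(Γ_N) = 2ℓ(Γ_N)/δ(Γ_N) be the inconstancy of the polygonal curve Γ_N through (0,u₀), …, (N,u_N). Then ℐ(Γ_N) converges as N → ∞ and the inconstancy of the sequence is ℐ((u_n)) = (d − 1 + 2√2)/(d + 1). In particular, for d = 1 (the sequence (01)^∞) the inconstancy equals √2. -/

import Mathlib

noncomputable section
open MeasureTheory Real Set Filter
open scoped ENNReal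

/-- The point `(x, y)` of the Euclidean plane. -/
def pt (x y : ℝ) : EuclideanSpace ℝ (Fin 2) := WithLp.toLp 2 ![x, y]

/-- The polygonal curve `Γ_N` through `(0,u₀), (1,u₁), …, (N,u_N)`: the union of the
segments joining `(i, u_i)` to `(i+1, u_{i+1})` for `i = 0, …, N−1`. -/
def polyCurve (u : ℕ → ℝ) (N : ℕ) : Set (EuclideanSpace ℝ (Fin 2)) :=
  ⋃ i ∈ Finset.range N, segment ℝ (pt i (u i)) (pt (i + 1) (u (i + 1)))

/-- The length `ℓ(Γ_N) = Σ_{i<N} √(1 + (u_{i+1} − u_i)²)` of the polygonal curve. -/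
def polyLength (u : ℕ → ℝ) (N : ℕ) : ℝ :=
  ∑ i ∈ Finset.range N, Real.sqrt (1 + (u (i + 1) - u i) ^ 2)

/-- The perimeter `δ(Γ_N)` of the convex hull of the polygonal curve: the
one-dimensional Hausdorff measure of the frontier of the convex hull. -/
def polyDelta (u : ℕ → ℝ) (N : ℕ) : ℝ :=
  (μH[1] (frontier (convexHull ℝ (polyCurve u N)))).toReal

/-- The inconstancy `ℐ(Γ_N) := 2 ℓ(Γ_N) / δ(Γ_N)` of the polygonal curve. -/
def polyIncon (u : ℕ → ℝ) (N : ℕ) : ℝ :=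
  2 * polyLength u N / polyDelta u N

/-! Γ_N only visits the heights 0 and 1, so its convex hull is the trapezoid with vertices
`(0,0)`, `(c,0)`, `(b,1)`, `(a,1)`, where `a`, `b` are the first and last indices `≤ N` of a `1`
and `c` the last one of a `0`. For `(0^d 1)^∞` the horizontal sides have total length
`2N + O(d)` and the slanted ones length `O(d)`, so `δ(Γ_N) / N → 2`. The length is additive over
periods with `ℓ(Γ_{d+1}) = d − 1 + 2√2`, so `ℓ(Γ_N) / N → (d − 1 + 2√2)/(d + 1)`, and
`ℐ(Γ_N) = 2 (ℓ(Γ_N) / N) / (δ(Γ_N) / N)`. -/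

open Topology

@[simp] lemma pt_apply_zero (x y : ℝ) : pt x y 0 = x := rfl

@[simp] lemma pt_apply_one (x y : ℝ) : pt x y 1 = y := rfl

lemma pt_eta (p : EuclideanSpace ℝ (Fin 2)) : pt (p 0) (p 1) = p := by
  ext i; fin_cases i <;> rfl

lemma smul_pt_add_smul_pt (s t x₁ y₁ x₂ y₂ : ℝ) :
    s • pt x₁ y₁ + t • pt x₂ y₂ = pt (s * x₁ + t * x₂) (s * y₁ + t * y₂) := by
  ext i; fin_cases i <;> simp [pt]

lemma dist_pt (x₁ y₁ x₂ y₂ : ℝ) :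
    dist (pt x₁ y₁) (pt x₂ y₂) = √((x₁ - x₂) ^ 2 + (y₁ - y₂) ^ 2) := by
  simp [EuclideanSpace.dist_eq, pt, Fin.sum_univ_two, Real.dist_eq, sq_abs]

lemma dist_pt_of_le {x₁ x₂ : ℝ} (h : x₁ ≤ x₂) (y : ℝ) : dist (pt x₁ y) (pt x₂ y) = x₂ - x₁ := by
  rw [dist_pt, sub_self, zero_pow two_ne_zero, add_zero, ← neg_sub, neg_sq,
    Real.sqrt_sq (sub_nonneg.2 h)]

lemma pt_mem_segment {t : ℝ} (ht₀ : 0 ≤ t) (ht₁ : t ≤ 1) (x₁ y₁ x₂ y₂ : ℝ) :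
    pt ((1 - t) * x₁ + t * x₂) ((1 - t) * y₁ + t * y₂) ∈ segment ℝ (pt x₁ y₁) (pt x₂ y₂) :=
  ⟨1 - t, t, by linarith, ht₀, by ring, smul_pt_add_smul_pt ..⟩

lemma pt_mul_mem_segment {y : ℝ} (hy₀ : 0 ≤ y) (hy₁ : y ≤ 1) (a : ℝ) :
    pt (a * y) y ∈ segment ℝ (pt 0 0) (pt a 1) := by
  convert pt_mem_segment hy₀ hy₁ 0 0 a 1 using 2 <;> ring

lemma pt_add_mul_mem_segment {y : ℝ} (hy₀ : 0 ≤ y) (hy₁ : y ≤ 1) (c b : ℝ) :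
    pt (c + (b - c) * y) y ∈ segment ℝ (pt c 0) (pt b 1) := by
  convert pt_mem_segment hy₀ hy₁ c 0 b 1 using 2 <;> ring

lemma segment_pt_subset (x₁ x₂ y : ℝ) :
    segment ℝ (pt x₁ y) (pt x₂ y) ⊆ {p | p 1 = y} := by
  rintro _ ⟨s, t, -, -, hst, rfl⟩
  simp [smul_pt_add_smul_pt, ← add_mul, hst]

lemma pt_mem_segment_of_le {x₁ x x₂ : ℝ} (y : ℝ) (h₁ : x₁ ≤ x) (h₂ : x ≤ x₂) :
    pt x y ∈ segment ℝ (pt x₁ y) (pt x₂ y) := by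
  obtain ⟨s, t, hs, ht, hst, rfl⟩ := Icc_subset_segment ⟨h₁, h₂⟩
  refine ⟨s, t, hs, ht, hst, ?_⟩
  rw [smul_pt_add_smul_pt, ← add_mul, hst, one_mul, smul_eq_mul, smul_eq_mul]

/-- The trapezoid with vertices `(0,0)`, `(c,0)`, `(b,1)`, `(a,1)`. -/
def trapezoid (c a b : ℝ) : Set (EuclideanSpace ℝ (Fin 2)) :=
  {p | 0 ≤ p 1 ∧ p 1 ≤ 1 ∧ a * p 1 ≤ p 0 ∧ p 0 ≤ c + (b - c) * p 1}

section Trapezoid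

variable {c a b : ℝ}

lemma convex_trapezoid (c a b : ℝ) : Convex ℝ (trapezoid c a b) := by
  rintro p ⟨hp₁, hp₂, hp₃, hp₄⟩ q ⟨hq₁, hq₂, hq₃, hq₄⟩ s t hs ht hst
  obtain rfl : t = 1 - s := by linarith
  simp only [trapezoid, mem_ofPred_eq, PiLp.add_apply, PiLp.smul_apply, smul_eq_mul]
  refine ⟨?_, ?_, ?_, ?_⟩ <;>
    linarith [mul_le_mul_of_nonneg_left hp₁ hs, mul_le_mul_of_nonneg_left hq₁ ht,
      mul_le_mul_of_nonneg_left hp₂ hs, mul_le_mul_of_nonneg_left hq₂ ht,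
      mul_le_mul_of_nonneg_left hp₃ hs, mul_le_mul_of_nonneg_left hq₃ ht,
      mul_le_mul_of_nonneg_left hp₄ hs, mul_le_mul_of_nonneg_left hq₄ ht]

lemma isClosed_trapezoid (c a b : ℝ) : IsClosed (trapezoid c a b) := by
  simp only [trapezoid, ofPred_and]
  exact (isClosed_le (by fun_prop) (by fun_prop)).inter <|
    (isClosed_le (by fun_prop) (by fun_prop)).inter <|
    (isClosed_le (by fun_prop) (by fun_prop)).inter (isClosed_le (by fun_prop) (by fun_prop))

lemma convexHull_eq_trapezoid {S : Set (EuclideanSpace ℝ (Fin 2))} (hS : S ⊆ trapezoid c a b)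
    (h₀ : pt 0 0 ∈ S) (hc : pt c 0 ∈ S) (hb : pt b 1 ∈ S) (ha : pt a 1 ∈ S) :
    convexHull ℝ S = trapezoid c a b := by
  refine (convexHull_min hS (convex_trapezoid c a b)).antisymm ?_
  rintro p ⟨hy₀, hy₁, hleft, hright⟩
  have hconv := convex_convexHull ℝ S
  have hmem := subset_convexHull ℝ S
  -- `p` lies on the horizontal chord joining the left edge to the right edge at height `p 1`
  have hl : pt (a * p 1) (p 1) ∈ convexHull ℝ S :=
    hconv.segment_subset (hmem h₀) (hmem ha) (pt_mul_mem_segment hy₀ hy₁ a)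
  have hr : pt (c + (b - c) * p 1) (p 1) ∈ convexHull ℝ S :=
    hconv.segment_subset (hmem hc) (hmem hb) (pt_add_mul_mem_segment hy₀ hy₁ c b)
  rw [← pt_eta p]
  exact hconv.segment_subset hl hr (pt_mem_segment_of_le _ hleft hright)

lemma mem_Ioo_of_mem_interior_trapezoid {p : EuclideanSpace ℝ (Fin 2)}
    (hp : p ∈ interior (trapezoid c a b)) : p 1 ∈ Ioo 0 1 := by
  have hline : Continuous fun t : ℝ => pt (p 0) t := by unfold pt; fun_prop
  rw [mem_interior_iff_mem_nhds, ← pt_eta p] at hp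
  rw [← interior_Icc, mem_interior_iff_mem_nhds]
  exact Filter.mem_of_superset (hline.continuousAt.preimage_mem_nhds hp) fun t ht => ⟨ht.1, ht.2.1⟩

lemma frontier_trapezoid_subset (c a b : ℝ) :
    frontier (trapezoid c a b) ⊆ (segment ℝ (pt 0 0) (pt c 0) ∪ segment ℝ (pt a 1) (pt b 1)) ∪
      (segment ℝ (pt 0 0) (pt a 1) ∪ segment ℝ (pt c 0) (pt b 1)) := by
  rw [(isClosed_trapezoid c a b).frontier_eq]
  rintro p ⟨⟨hy₀, hy₁, hleft, hright⟩, hint⟩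
  have hopen : IsOpen {q : EuclideanSpace ℝ (Fin 2) |
      0 < q 1 ∧ q 1 < 1 ∧ a * q 1 < q 0 ∧ q 0 < c + (b - c) * q 1} := by
    simp only [ofPred_and]
    exact (isOpen_lt (by fun_prop) (by fun_prop)).inter <|
      (isOpen_lt (by fun_prop) (by fun_prop)).inter <|
      (isOpen_lt (by fun_prop) (by fun_prop)).inter (isOpen_lt (by fun_prop) (by fun_prop))
  have hsub : {q : EuclideanSpace ℝ (Fin 2) |
      0 < q 1 ∧ q 1 < 1 ∧ a * q 1 < q 0 ∧ q 0 < c + (b - c) * q 1} ⊆ trapezoid c a b :=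
    fun _ hq => ⟨hq.1.le, hq.2.1.le, hq.2.2.1.le, hq.2.2.2.le⟩
  have hedge : p 1 = 0 ∨ p 1 = 1 ∨ a * p 1 = p 0 ∨ p 0 = c + (b - c) * p 1 := by
    by_contra! h
    exact hint (interior_maximal hsub hopen ⟨hy₀.lt_of_ne h.1.symm, hy₁.lt_of_ne h.2.1,
      hleft.lt_of_ne h.2.2.1, hright.lt_of_ne h.2.2.2⟩)
  rw [← pt_eta p]
  rcases hedge with h | h | h | h
  · rw [h] at hleft hright ⊢
    exact Or.inl <| Or.inl <| pt_mem_segment_of_le 0 (by simpa using hleft) (by simpa using hright)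
  · rw [h] at hleft hright ⊢
    exact Or.inl <| Or.inr <| pt_mem_segment_of_le 1 (by simpa using hleft) (by simpa using hright)
  · rw [← h]
    exact Or.inr <| Or.inl <| pt_mul_mem_segment hy₀ hy₁ a
  · rw [h]
    exact Or.inr <| Or.inr <| pt_add_mul_mem_segment hy₀ hy₁ c b

lemma mem_frontier_trapezoid {p : EuclideanSpace ℝ (Fin 2)} (hp : p ∈ trapezoid c a b)
    (h : p 1 = 0 ∨ p 1 = 1) : p ∈ frontier (trapezoid c a b) := by
  rw [(isClosed_trapezoid c a b).frontier_eq]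
  refine ⟨hp, fun hint => ?_⟩
  have := mem_Ioo_of_mem_interior_trapezoid hint
  rcases h with h | h <;> simp [h] at this

lemma segment_union_segment_subset_frontier_trapezoid (hc : 0 ≤ c) (hab : a ≤ b) :
    segment ℝ (pt 0 0) (pt c 0) ∪ segment ℝ (pt a 1) (pt b 1) ⊆ frontier (trapezoid c a b) := by
  have hconv := convex_trapezoid c a b
  rintro p (hp | hp)
  · refine mem_frontier_trapezoid (hconv.segment_subset ?_ ?_ hp)
      (Or.inl (segment_pt_subset _ _ _ hp)) <;> simp [trapezoid, hc]
  · refine mem_frontier_trapezoid (hconv.segment_subset ?_ ?_ hp)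
      (Or.inr (segment_pt_subset _ _ _ hp)) <;> simp [trapezoid, hab]

lemma hausdorffMeasure_frontier_trapezoid_le (hc : 0 ≤ c) (hab : a ≤ b) :
    μH[1] (frontier (trapezoid c a b)) ≤
      ENNReal.ofReal (c + (b - a) + √(a ^ 2 + 1) + √((b - c) ^ 2 + 1)) := by
  have hleft : dist (pt 0 0) (pt a 1) = √(a ^ 2 + 1) := by simp [dist_pt]
  have hright : dist (pt c 0) (pt b 1) = √((b - c) ^ 2 + 1) := by
    rw [dist_pt]; congr 1; ring
  calc μH[1] (frontier (trapezoid c a b))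
      ≤ μH[1] ((segment ℝ (pt 0 0) (pt c 0) ∪ segment ℝ (pt a 1) (pt b 1)) ∪
          (segment ℝ (pt 0 0) (pt a 1) ∪ segment ℝ (pt c 0) (pt b 1))) :=
        measure_mono (frontier_trapezoid_subset c a b)
    _ ≤ (μH[1] (segment ℝ (pt 0 0) (pt c 0)) + μH[1] (segment ℝ (pt a 1) (pt b 1))) +
          (μH[1] (segment ℝ (pt 0 0) (pt a 1)) + μH[1] (segment ℝ (pt c 0) (pt b 1))) :=
        (measure_union_le _ _).trans (add_le_add (measure_union_le _ _) (measure_union_le _ _))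
    _ = _ := by
        simp only [hausdorffMeasure_segment, edist_dist, dist_pt_of_le hc, sub_zero,
          dist_pt_of_le hab, hleft, hright]
        rw [← ENNReal.ofReal_add hc (sub_nonneg.2 hab), ← ENNReal.ofReal_add (by positivity)
          (by positivity), ← ENNReal.ofReal_add (by linarith) (by positivity)]
        congr 1
        ring

lemma ofReal_le_hausdorffMeasure_frontier_trapezoid (hc : 0 ≤ c) (hab : a ≤ b) :
    ENNReal.ofReal (c + (b - a)) ≤ μH[1] (frontier (trapezoid c a b)) := by
  have hdisj : Disjoint (segment ℝ (pt 0 0) (pt c 0)) (segment ℝ (pt a 1) (pt b 1)) :=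
    (Set.disjoint_left.2 fun p h₀ h₁ => by simp_all).mono
      (segment_pt_subset _ _ _) (segment_pt_subset _ _ _)
  have hmeas : MeasurableSet (segment ℝ (pt a 1) (pt b 1)) := by
    rw [← convexHull_pair (𝕜 := ℝ)]
    exact (Set.toFinite {pt a 1, pt b 1}).isCompact_convexHull ℝ |>.isClosed.measurableSet
  calc ENNReal.ofReal (c + (b - a))
      = μH[1] (segment ℝ (pt 0 0) (pt c 0)) + μH[1] (segment ℝ (pt a 1) (pt b 1)) := by
        rw [hausdorffMeasure_segment, hausdorffMeasure_segment, edist_dist, edist_dist,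
          dist_pt_of_le hc, dist_pt_of_le hab, sub_zero, ENNReal.ofReal_add hc (sub_nonneg.2 hab)]
    _ = μH[1] (segment ℝ (pt 0 0) (pt c 0) ∪ segment ℝ (pt a 1) (pt b 1)) :=
        (measure_union hdisj hmeas).symm
    _ ≤ μH[1] (frontier (trapezoid c a b)) :=
        measure_mono (segment_union_segment_subset_frontier_trapezoid hc hab)

end Trapezoid

lemma pt_mem_polyCurve (u : ℕ → ℝ) {N i : ℕ} (hN : 0 < N) (hi : i ≤ N) :
    pt i (u i) ∈ polyCurve u N := by
  rcases hi.lt_or_eq with hi | rfl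
  · exact mem_biUnion (Finset.mem_range.2 hi) (left_mem_segment ℝ _ _)
  · obtain ⟨k, rfl⟩ := Nat.exists_eq_succ_of_ne_zero hN.ne'
    refine mem_biUnion (Finset.mem_range.2 k.lt_succ_self) ?_
    push_cast
    exact right_mem_segment ℝ _ _

lemma polyCurve_subset {u : ℕ → ℝ} {N : ℕ} {K : Set (EuclideanSpace ℝ (Fin 2))}
    (hK : Convex ℝ K) (h : ∀ i ≤ N, pt i (u i) ∈ K) : polyCurve u N ⊆ K := by
  refine iUnion₂_subset fun i hi => hK.segment_subset (h i (Finset.mem_range.1 hi).le) ?_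
  exact_mod_cast h (i + 1) (Finset.mem_range.1 hi)

section Binary

variable {u : ℕ → ℝ} {N a b c : ℕ}

theorem convexHull_polyCurve_of_binary (hbin : ∀ i, u i = 0 ∨ u i = 1) (hN : 0 < N)
    (hu₀ : u 0 = 0) (ha : IsLeast {i | i ≤ N ∧ u i = 1} a)
    (hb : IsGreatest {i | i ≤ N ∧ u i = 1} b) (hc : IsGreatest {i | i ≤ N ∧ u i = 0} c) :
    convexHull ℝ (polyCurve u N) = trapezoid c a b := by
  have hpt : ∀ i ≤ N, pt i (u i) ∈ trapezoid c a b := by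
    intro i hi
    rcases hbin i with h | h
    · have : (i : ℝ) ≤ c := by exact_mod_cast hc.2 ⟨hi, h⟩
      simpa [trapezoid, h] using this
    · have : (a : ℝ) ≤ i ∧ (i : ℝ) ≤ b :=
        ⟨by exact_mod_cast ha.2 ⟨hi, h⟩, by exact_mod_cast hb.2 ⟨hi, h⟩⟩
      simpa [trapezoid, h] using this
  refine convexHull_eq_trapezoid (polyCurve_subset (convex_trapezoid c a b) hpt) ?_ ?_ ?_ ?_
  · simpa only [hu₀, Nat.cast_zero] using pt_mem_polyCurve u hN N.zero_le
  · simpa only [hc.1.2] using pt_mem_polyCurve u hN hc.1.1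
  · simpa only [hb.1.2] using pt_mem_polyCurve u hN hb.1.1
  · simpa only [ha.1.2] using pt_mem_polyCurve u hN ha.1.1

theorem polyDelta_bounds_of_binary (hbin : ∀ i, u i = 0 ∨ u i = 1) (hN : 0 < N)
    (hu₀ : u 0 = 0) (ha : IsLeast {i | i ≤ N ∧ u i = 1} a)
    (hb : IsGreatest {i | i ≤ N ∧ u i = 1} b) (hc : IsGreatest {i | i ≤ N ∧ u i = 0} c) :
    (c : ℝ) + (b - a) ≤ polyDelta u N ∧
      polyDelta u N ≤ c + (b - a) + √((a : ℝ) ^ 2 + 1) + √(((b : ℝ) - c) ^ 2 + 1) := by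
  have hab : (a : ℝ) ≤ b := by exact_mod_cast ha.2 hb.1
  have hc₀ : (0 : ℝ) ≤ c := c.cast_nonneg
  have hle := hausdorffMeasure_frontier_trapezoid_le hc₀ hab
  rw [polyDelta, convexHull_polyCurve_of_binary hbin hN hu₀ ha hb hc]
  refine ⟨(ENNReal.ofReal_le_iff_le_toReal (ne_top_of_le_ne_top ENNReal.ofReal_ne_top hle)).1
    (ofReal_le_hausdorffMeasure_frontier_trapezoid hc₀ hab), ENNReal.toReal_le_of_le_ofReal ?_ hle⟩
  linarith [Real.sqrt_nonneg ((a : ℝ) ^ 2 + 1), Real.sqrt_nonneg (((b : ℝ) - c) ^ 2 + 1)]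

end Binary

lemma tendsto_div_natCast_of_abs_sub_le {g : ℕ → ℝ} {c C : ℝ}
    (h : ∀ᶠ N : ℕ in atTop, |g N - c * N| ≤ C) :
    Tendsto (fun N : ℕ => g N / N) atTop (𝓝 c) := by
  rw [← tendsto_sub_nhds_zero_iff]
  refine squeeze_zero_norm' ?_ (tendsto_const_div_atTop_nhds_zero_nat C)
  filter_upwards [h, eventually_gt_atTop 0] with N hN hN₀
  have hN₀' : (N : ℝ) ≠ 0 := by positivity
  rw [Real.norm_eq_abs, show g N / N - c = (g N - c * N) / N by field_simp, abs_div,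
    Nat.abs_cast]
  exact div_le_div_of_nonneg_right hN N.cast_nonneg

lemma polyLength_nonneg (u : ℕ → ℝ) (N : ℕ) : 0 ≤ polyLength u N :=
  Finset.sum_nonneg fun _ _ => Real.sqrt_nonneg _

lemma polyLength_mono (u : ℕ → ℝ) : Monotone (polyLength u) := fun _ _ hmn =>
  Finset.sum_le_sum_of_subset_of_nonneg (Finset.range_mono hmn) fun _ _ _ => Real.sqrt_nonneg _

section Periodic

variable {u : ℕ → ℝ} {m : ℕ}

lemma polyLength_add_of_periodic (hu : Function.Periodic u m) (n : ℕ) :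
    polyLength u (m + n) = polyLength u m + polyLength u n := by
  simp only [polyLength, Finset.sum_range_add]
  congr 1
  refine Finset.sum_congr rfl fun i _ => ?_
  rw [add_comm m i, hu, add_right_comm, hu]

lemma polyLength_mul_add_of_periodic (hu : Function.Periodic u m) (q r : ℕ) :
    polyLength u (q * m + r) = q * polyLength u m + polyLength u r := by
  induction q with
  | zero => simp
  | succ q ih =>
    rw [add_mul, one_mul, add_comm (q * m) m, add_assoc, polyLength_add_of_periodic hu, ih]
    push_cast
    ring

lemma tendsto_polyLength_div_of_periodic (hu : Function.Periodic u m) (hm : 0 < m) :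
    Tendsto (fun N : ℕ => polyLength u N / N) atTop (𝓝 (polyLength u m / m)) := by
  refine tendsto_div_natCast_of_abs_sub_le (C := 2 * polyLength u m) (.of_forall fun N => ?_)
  have hr : N % m < m := Nat.mod_lt N hm
  have hℓr : polyLength u (N % m) ≤ polyLength u m := polyLength_mono u hr.le
  have hrm : ((N % m : ℕ) : ℝ) / m ≤ 1 := div_le_one_of_le₀ (by exact_mod_cast hr.le) m.cast_nonneg
  have hm' : (m : ℝ) ≠ 0 := by positivity
  rw [← Nat.div_add_mod' N m, polyLength_mul_add_of_periodic hu]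
  have : (N / m : ℕ) * polyLength u m + polyLength u (N % m) -
      polyLength u m / m * ((N / m * m + N % m : ℕ) : ℝ) =
      polyLength u (N % m) - polyLength u m * (((N % m : ℕ) : ℝ) / m) := by
    push_cast; field_simp; ring
  have hℓr₀ := polyLength_nonneg u (N % m)
  have hℓm₀ := polyLength_nonneg u m
  have h₁ : 0 ≤ polyLength u m * (((N % m : ℕ) : ℝ) / m) := by positivity
  have h₂ : polyLength u m * (((N % m : ℕ) : ℝ) / m) ≤ polyLength u m :=
    mul_le_of_le_one_right hℓm₀ hrm
  rw [this, abs_le]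
  constructor <;> linarith

end Periodic

lemma sqrt_sq_add_one_le (x : ℝ) : √(x ^ 2 + 1) ≤ |x| + 1 :=
  Real.sqrt_le_iff.2 ⟨by positivity, by nlinarith [abs_nonneg x, sq_abs x]⟩

lemma mod_add_one_eq_iff_dvd (d i : ℕ) : i % (d + 1) = d ↔ d + 1 ∣ i + 1 := by
  have key : i ≡ d [MOD d + 1] ↔ i + 1 ≡ d + 1 [MOD d + 1] :=
    ⟨fun h => h.add_right 1, Nat.ModEq.add_right_cancel' 1⟩
  rw [Nat.ModEq, Nat.mod_eq_of_lt d.lt_succ_self] at key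
  rw [key, ← Nat.modEq_zero_iff_dvd]
  exact ⟨fun h => h.trans Nat.modulus_modEq_zero, fun h => h.trans Nat.modulus_modEq_zero.symm⟩

def zerosOne (d n : ℕ) : ℝ := if n % (d + 1) = d then 1 else 0

section ZerosOne

variable {d n : ℕ}

lemma zerosOne_eq_one_iff : zerosOne d n = 1 ↔ d + 1 ∣ n + 1 := by
  simp [zerosOne, ← mod_add_one_eq_iff_dvd]

lemma zerosOne_eq_zero_iff : zerosOne d n = 0 ↔ ¬ d + 1 ∣ n + 1 := by
  simp [zerosOne, ← mod_add_one_eq_iff_dvd]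

lemma zerosOne_eq_zero_or_one (d n : ℕ) : zerosOne d n = 0 ∨ zerosOne d n = 1 := by
  unfold zerosOne; split_ifs <;> simp

lemma zerosOne_of_lt (h : n < d) : zerosOne d n = 0 := by
  simp [zerosOne, Nat.mod_eq_of_lt (h.trans d.lt_succ_self), h.ne]

lemma zerosOne_self (d : ℕ) : zerosOne d d = 1 := by
  simp [zerosOne, Nat.mod_eq_of_lt d.lt_succ_self]

lemma periodic_zerosOne (d : ℕ) : Function.Periodic (zerosOne d) (d + 1) := fun n => by
  simp [zerosOne]

lemma polyLength_zerosOne_period (hd : 1 ≤ d) :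
    polyLength (zerosOne d) (d + 1) = d - 1 + 2 * √2 := by
  obtain ⟨k, rfl⟩ := Nat.exists_eq_add_of_le' hd
  have hlast : zerosOne (k + 1) (k + 2) = 0 := by simp [zerosOne]
  rw [polyLength, Finset.sum_range_succ, Finset.sum_range_succ,
    Finset.sum_congr rfl fun i hi => by
      rw [zerosOne_of_lt (by simp at hi; omega), zerosOne_of_lt (by simp at hi; omega)]]
  simp only [zerosOne_of_lt k.lt_succ_self, zerosOne_self, hlast, Finset.sum_const,
    Finset.card_range]
  norm_num
  ring

lemma le_add_of_isGreatest_zerosOne_eq_one {N b : ℕ} (hN : d ≤ N)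
    (hb : IsGreatest {i | i ≤ N ∧ zerosOne d i = 1} b) : N ≤ b + d := by
  -- witness: one less than the largest multiple of `d + 1` that is at most `N + 1`
  have hq : 0 < (N + 1) / (d + 1) := Nat.div_pos (by omega) (by omega)
  have hdiv := Nat.div_add_mod (N + 1) (d + 1)
  have hmod := Nat.mod_lt (N + 1) (by omega : 0 < d + 1)
  have hmem : (d + 1) * ((N + 1) / (d + 1)) - 1 ∈ {i | i ≤ N ∧ zerosOne d i = 1} := by
    refine ⟨by omega, zerosOne_eq_one_iff.2 ?_⟩
    rw [Nat.sub_add_cancel (Nat.mul_pos d.succ_pos hq)]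
    exact dvd_mul_right _ _
  have := hb.2 hmem
  omega

lemma le_add_one_of_isGreatest_zerosOne_eq_zero {N c : ℕ} (hd : 1 ≤ d)
    (hc : IsGreatest {i | i ≤ N ∧ zerosOne d i = 0} c) : N ≤ c + 1 := by
  by_cases h : zerosOne d N = 0
  · exact (hc.2 ⟨le_rfl, h⟩).trans c.le_succ
  -- two consecutive terms are never both `1`
  have hdvd : d + 1 ∣ N + 1 := zerosOne_eq_one_iff.1 ((zerosOne_eq_zero_or_one d N).resolve_left h)
  have hN : N - 1 + 1 = N :=
    Nat.sub_add_cancel (Nat.one_le_iff_ne_zero.2 fun h₀ => h (h₀ ▸ zerosOne_of_lt hd))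
  have hmem : N - 1 ∈ {i | i ≤ N ∧ zerosOne d i = 0} := by
    refine ⟨N.sub_le 1, zerosOne_eq_zero_iff.2 fun h' => ?_⟩
    rw [hN] at h'
    have := Nat.le_of_dvd one_pos ((Nat.dvd_add_right h').1 hdvd)
    omega
  have := hc.2 hmem
  omega

lemma abs_polyDelta_zerosOne_sub_le {N : ℕ} (hd : 1 ≤ d) (hN : d ≤ N) :
    |polyDelta (zerosOne d) N - 2 * N| ≤ 2 * d + 2 := by
  set u := zerosOne d
  have ha : IsLeast {i | i ≤ N ∧ u i = 1} d :=
    ⟨⟨hN, zerosOne_self d⟩, fun i hi => not_lt.1 fun h => by simp [u, zerosOne_of_lt h] at hi⟩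
  have hu₀ : u 0 = 0 := zerosOne_of_lt hd
  obtain ⟨b, hb⟩ := BddAbove.exists_isGreatest_of_nonempty
    (S := {i | i ≤ N ∧ u i = 1}) ⟨N, fun i hi => hi.1⟩ ⟨d, ha.1⟩
  obtain ⟨c, hc⟩ := BddAbove.exists_isGreatest_of_nonempty
    (S := {i | i ≤ N ∧ u i = 0}) ⟨N, fun i hi => hi.1⟩ ⟨0, N.zero_le, hu₀⟩
  obtain ⟨hlo, hhi⟩ :=
    polyDelta_bounds_of_binary (zerosOne_eq_zero_or_one d) (by omega) hu₀ ha hb hc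
  have hbN : (b : ℝ) ≤ N := by exact_mod_cast hb.1.1
  have hcN : (c : ℝ) ≤ N := by exact_mod_cast hc.1.1
  have hNb : (N : ℝ) ≤ b + d := by exact_mod_cast le_add_of_isGreatest_zerosOne_eq_one hN hb
  have hNc : (N : ℝ) ≤ c + 1 := by exact_mod_cast le_add_one_of_isGreatest_zerosOne_eq_zero hd hc
  have hd' : (1 : ℝ) ≤ d := by exact_mod_cast hd
  have hsa := sqrt_sq_add_one_le (d : ℝ)
  have hsb := sqrt_sq_add_one_le ((b : ℝ) - c)
  rw [abs_of_nonneg d.cast_nonneg] at hsa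
  have hbc : |(b : ℝ) - c| ≤ d := abs_le.2 ⟨by linarith, by linarith⟩
  rw [abs_le]
  constructor <;> linarith

end ZerosOne

/-- Inconstancy of the periodic binary sequence `(0^d 1)^∞` (i.e., `u_n = 1` iff
`n ≡ d (mod d+1)`): the inconstancy exists and equals `(d − 1 + 2√2)/(d + 1)`; in
particular for `d = 1` (the sequence `(01)^∞`) it equals `√2`. -/
theorem polyIncon_periodic (d : ℕ) (hd : 1 ≤ d) (u : ℕ → ℝ)
    (hu : ∀ n, u n = if n % (d + 1) = d then 1 else 0) :
    Tendsto (fun N : ℕ => polyIncon u N) atTop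
      (nhds (((d : ℝ) - 1 + 2 * Real.sqrt 2) / ((d : ℝ) + 1))) ∧
    (d = 1 → ((d : ℝ) - 1 + 2 * Real.sqrt 2) / ((d : ℝ) + 1) = Real.sqrt 2) := by
  obtain rfl : u = zerosOne d := funext hu
  refine ⟨?_, fun h => by subst h; norm_num⟩
  have hℓ := tendsto_polyLength_div_of_periodic (periodic_zerosOne d) d.succ_pos
  rw [polyLength_zerosOne_period hd] at hℓ
  have hδ : Tendsto (fun N : ℕ => polyDelta (zerosOne d) N / N) atTop (𝓝 2) :=
    tendsto_div_natCast_of_abs_sub_le <| (eventually_ge_atTop d).mono fun N hN =>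
      abs_polyDelta_zerosOne_sub_le hd hN
  have hlim := (hℓ.const_mul 2).div hδ two_ne_zero
  rw [mul_div_cancel_left₀ _ two_ne_zero] at hlim
  push_cast at hlim
  refine hlim.congr' ((eventually_ne_atTop 0).mono fun N hN => ?_)
  simp only [polyIncon, Pi.div_apply]
  rw [← mul_div_assoc, div_div_div_cancel_right₀ (Nat.cast_ne_zero.2 hN)]
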